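/- Suppose ∇_h E(ĥ; s, a) = 0 at ĥ = (ĥ^1, …, ĥ^{L-1}) (with ĥ^0 = s). Then for every l ∈ {1, …, L−1}, the REINFORCE parameter gradient at layer l admits the backpropagation-style chain factorization ∇_{W^l} log π_l(ĥ^{l-1}, ĥ^l; W^l) = (D_{W^l} g^l(ĥ^{l-1}; W^l))^T (D_{h^l} g^{l+1}(ĥ^l; W^{l+1}))^T (D_{h^{l+1}} g^{l+2}(ĥ^{l+1}; W^{l+2}))^T ⋯ (D_{h^{L-2}} g^{L-1}(ĥ^{L-2}; W^{L-1}))^T ∇_{h^{L-1}} log π_L(ĥ^{L-1}, a; W^L), where D denotes the Jacobian with respect to the indicated argument. -/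

import Mathlib

/-- The multivariate Gaussian density on `ℝⁿ` with mean `μ` and covariance `σ² I`. -/
noncomputable def gaussDensity {n : ℕ} (σ : ℝ) (μ y : EuclideanSpace ℝ (Fin n)) : ℝ :=
  (Real.sqrt (2 * Real.pi * σ ^ 2))⁻¹ ^ n * Real.exp (-‖y - μ‖ ^ 2 / (2 * σ ^ 2))

/-!
Write `δ^k = σ_k⁻² (ĥ^k - g^k(ĥ^{k-1}))` for the residual of layer `k`. It is the gradient of
`log N(ĥ^k; μ, σ_k² I)` in the mean `μ`, so by the chain rule
`∇_{W^l} log π_l = (D_W g^l)ᵀ δ^l`. The energy depends on `h^k` only through `log π_k`, whose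
gradient in `h^k` is `-δ^k`, and through `log π_{k+1}`, whose gradient is `(D_h g^{k+1})ᵀ δ^{k+1}`
(or `∇ log π_L` at the top layer). Stationarity therefore says that `δ` satisfies the same
backward recursion as the chain `v`, with the same value at the top layer, so `δ = v`.
-/

open InnerProductSpace Finset Function

section Gradient

variable {F G : Type*} [NormedAddCommGroup F] [InnerProductSpace ℝ F] [CompleteSpace F]
  [NormedAddCommGroup G] [InnerProductSpace ℝ G] [CompleteSpace G]
  {f₁ f₂ : F → ℝ} {f₁' f₂' x : F}

theorem HasGradientAt.add (h₁ : HasGradientAt f₁ f₁' x) (h₂ : HasGradientAt f₂ f₂' x) :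
    HasGradientAt (fun x => f₁ x + f₂ x) (f₁' + f₂') x := by
  rw [hasGradientAt_iff_hasFDerivAt, map_add]
  exact h₁.hasFDerivAt.add h₂.hasFDerivAt

theorem HasGradientAt.neg (h : HasGradientAt f₁ f₁' x) :
    HasGradientAt (fun x => -f₁ x) (-f₁') x := by
  rw [hasGradientAt_iff_hasFDerivAt, map_neg]
  exact h.hasFDerivAt.neg

theorem HasGradientAt.add_const (h : HasGradientAt f₁ f₁' x) (c : ℝ) :
    HasGradientAt (fun x => f₁ x + c) f₁' x :=
  hasGradientAt_iff_hasFDerivAt.mpr (h.hasFDerivAt.add_const c)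

theorem HasGradientAt.const_mul (h : HasGradientAt f₁ f₁' x) (c : ℝ) :
    HasGradientAt (fun x => c * f₁ x) (c • f₁') x := by
  rw [hasGradientAt_iff_hasFDerivAt, map_smul]
  exact h.hasFDerivAt.const_mul c

theorem HasGradientAt.comp_hasFDerivAt {f : F → ℝ} {f' : F} {φ : G → F} {φ' : G →L[ℝ] F}
    {w : G} (hf : HasGradientAt f f' (φ w)) (hφ : HasFDerivAt φ φ' w) :
    HasGradientAt (f ∘ φ) (ContinuousLinearMap.adjoint φ' f') w := by
  rw [hasGradientAt_iff_hasFDerivAt]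
  refine (hf.hasFDerivAt.comp w hφ).congr_fderiv ?_
  ext u
  simp [ContinuousLinearMap.adjoint_inner_left]

theorem hasGradientAt_norm_sub_sq (μ x : F) :
    HasGradientAt (fun x => ‖x - μ‖ ^ 2) ((2 : ℝ) • (x - μ)) x := by
  rw [hasGradientAt_iff_hasFDerivAt]
  refine (((hasFDerivAt_id x).sub_const μ).norm_sq).congr_fderiv ?_
  ext u
  simp

end Gradient

theorem log_gaussDensity {n : ℕ} (σ : ℝ) (μ y : EuclideanSpace ℝ (Fin n)) :
    Real.log (gaussDensity σ μ y)
      = n * Real.log (Real.sqrt (2 * Real.pi * σ ^ 2))⁻¹ - ‖y - μ‖ ^ 2 / (2 * σ ^ 2) := by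
  -- for `σ = 0` both sides vanish, since `x / 0 = 0` and `log 0 = 0`
  rcases eq_or_ne σ 0 with rfl | hσ
  · rcases n.eq_zero_or_pos with rfl | hn <;> simp [gaussDensity, *]
  · rw [gaussDensity, Real.log_mul (by positivity) (Real.exp_ne_zero _), Real.log_pow,
      Real.log_exp]
    ring

theorem hasGradientAt_log_gaussDensity {n : ℕ} (σ : ℝ) (μ y : EuclideanSpace ℝ (Fin n)) :
    HasGradientAt (fun y => Real.log (gaussDensity σ μ y)) ((σ ^ 2)⁻¹ • (μ - y)) y := by
  convert ((hasGradientAt_norm_sub_sq μ y).const_mul (-(2 * σ ^ 2)⁻¹)).add_const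
    (n * Real.log (Real.sqrt (2 * Real.pi * σ ^ 2))⁻¹) using 1
  · funext y
    rw [log_gaussDensity]
    ring
  · module

theorem gaussDensity_comm {n : ℕ} (σ : ℝ) (μ y : EuclideanSpace ℝ (Fin n)) :
    gaussDensity σ μ y = gaussDensity σ y μ := by
  rw [gaussDensity, gaussDensity, norm_sub_rev]

theorem hasGradientAt_log_gaussDensity_comp {G : Type*} [NormedAddCommGroup G]
    [InnerProductSpace ℝ G] [CompleteSpace G] {n : ℕ} (σ : ℝ)
    {φ : G → EuclideanSpace ℝ (Fin n)} {w : G} (hφ : DifferentiableAt ℝ φ w)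
    (y : EuclideanSpace ℝ (Fin n)) :
    HasGradientAt (fun w => Real.log (gaussDensity σ (φ w) y))
      (ContinuousLinearMap.adjoint (fderiv ℝ φ w) ((σ ^ 2)⁻¹ • (y - φ w))) w := by
  have h := hasGradientAt_log_gaussDensity σ y (φ w)
  simp only [gaussDensity_comm σ y] at h
  exact h.comp_hasFDerivAt hφ.hasFDerivAt

theorem Finset.sum_update_eq_add_sum_sdiff {β : ℕ → Type*} (F : ℕ → ((l : ℕ) → β l) → ℝ)
    (hF : ∀ j h h', h (j - 1) = h' (j - 1) → h j = h' j → F j h = F j h')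
    {s t : Finset ℕ} (hts : t ⊆ s) {k : ℕ} (hkt : ∀ j ∈ s, j = k ∨ j - 1 = k → j ∈ t)
    (h : (l : ℕ) → β l) (x : β k) :
    ∑ j ∈ s, F j (update h k x) = ∑ j ∈ t, F j (update h k x) + ∑ j ∈ s \ t, F j h := by
  rw [← sum_sdiff hts, add_comm]
  congr 1
  refine sum_congr rfl fun j hj => ?_
  obtain ⟨hjs, hjt⟩ := mem_sdiff.mp hj
  exact hF j _ _ (update_of_ne (fun e => hjt (hkt j hjs (.inr e))) _ _)
    (update_of_ne (fun e => hjt (hkt j hjs (.inl e))) _ _)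

theorem Nat.eq_of_backward_recursion {β : ℕ → Type*} {x y : (k : ℕ) → β k}
    (T : (k : ℕ) → β (k + 1) → β k) {m N : ℕ} (htop : x N = y N)
    (hx : ∀ k, m ≤ k → k < N → x k = T k (x (k + 1)))
    (hy : ∀ k, m ≤ k → k < N → y k = T k (y (k + 1))) {k : ℕ} (hmk : m ≤ k) (hkN : k ≤ N) :
    x k = y k := by
  induction hkN using Nat.decreasingInduction with
  | self => exact htop
  | of_succ k hk ih => rw [hx k hmk hk, hy k hmk hk, ih (hmk.trans k.le_succ)]

section Network

local notation "ℝ^" d => EuclideanSpace ℝ (Fin d)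

variable {L : ℕ} {n dpar : ℕ → ℕ} {g : (l : ℕ) → (ℝ^ dpar l) → (ℝ^ n (l - 1)) → ℝ^ n l}
  {σ : ℕ → ℝ} {W : (l : ℕ) → ℝ^ dpar l} {α : Type*} {πL : (ℝ^ n (L - 1)) → α → ℝ} {a : α}
  {hhat : (l : ℕ) → ℝ^ n l}

variable (g σ W) in
noncomputable def layerLogDensity (j : ℕ) (h : (l : ℕ) → ℝ^ n l) : ℝ :=
  Real.log (gaussDensity (σ j) (g j (W j) (h (j - 1))) (h j))

-- this is `-E(h; s, a) + C(s, a)`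
variable (L g σ W πL a) in
noncomputable def networkLogLikelihood (h : (l : ℕ) → ℝ^ n l) : ℝ :=
  ∑ j ∈ Icc 1 (L - 1), layerLogDensity g σ W j h + Real.log (πL (h (L - 1)) a)

variable (g σ W) in
noncomputable def layerResidual (h : (l : ℕ) → ℝ^ n l) (k : ℕ) : ℝ^ n k :=
  (σ k ^ 2)⁻¹ • (h k - g k (W k) (h (k - 1)))

theorem layerLogDensity_congr {j : ℕ} {h h' : (l : ℕ) → ℝ^ n l} (h₁ : h (j - 1) = h' (j - 1))
    (h₂ : h j = h' j) : layerLogDensity g σ W j h = layerLogDensity g σ W j h' := by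
  rw [layerLogDensity, h₁, h₂, layerLogDensity]

theorem layerLogDensity_update_self {k : ℕ} (hk : 1 ≤ k) (h : (l : ℕ) → ℝ^ n l) (x : ℝ^ n k) :
    layerLogDensity g σ W k (update h k x)
      = Real.log (gaussDensity (σ k) (g k (W k) (h (k - 1))) x) := by
  rw [layerLogDensity, update_self, update_of_ne (by omega)]

theorem layerLogDensity_succ_update {k : ℕ} (h : (l : ℕ) → ℝ^ n l) (x : ℝ^ n k) :
    layerLogDensity g σ W (k + 1) (update h k x)
      = Real.log (gaussDensity (σ (k + 1)) (g (k + 1) (W (k + 1)) x) (h (k + 1))) := by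
  rw [layerLogDensity, update_of_ne k.succ_ne_self]
  exact congrArg (fun z => Real.log (gaussDensity _ (g (k + 1) (W (k + 1)) z) _))
    (update_self k x h)

theorem layerResidual_eq_of_stationary {C : ℝ} {k : ℕ} {B : (ℝ^ n k) → ℝ} {b : ℝ^ n k}
    (hB : HasGradientAt B b (hhat k))
    (hsplit : ∀ x, networkLogLikelihood L g σ W πL a (update hhat k x)
      = Real.log (gaussDensity (σ k) (g k (W k) (hhat (k - 1))) x) + B x)
    (hstat : gradient (fun x => -networkLogLikelihood L g σ W πL a (update hhat k x) + C)
      (hhat k) = 0) :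
    layerResidual g σ W hhat k = b := by
  simp only [hsplit] at hstat
  rw [(((hasGradientAt_log_gaussDensity _ _ _).add hB).neg.add_const C).gradient, neg_eq_zero,
    add_eq_zero_iff_neg_eq, ← smul_neg, neg_sub] at hstat
  exact hstat

theorem layerResidual_eq_adjoint_layerResidual_succ {C : ℝ} {k : ℕ} (hk : 1 ≤ k)
    (hkL : k + 1 ≤ L - 1) (hg : DifferentiableAt ℝ (g (k + 1) (W (k + 1))) (hhat k))
    (hstat : gradient (fun x => -networkLogLikelihood L g σ W πL a (update hhat k x) + C)
      (hhat k) = 0) :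
    layerResidual g σ W hhat k
      = ContinuousLinearMap.adjoint (fderiv ℝ (g (k + 1) (W (k + 1))) (hhat k))
          (layerResidual g σ W hhat (k + 1)) := by
  refine layerResidual_eq_of_stationary
    ((hasGradientAt_log_gaussDensity_comp _ hg _).add_const
      (∑ j ∈ Icc 1 (L - 1) \ {k, k + 1}, layerLogDensity g σ W j hhat
        + Real.log (πL (hhat (L - 1)) a))) (fun x => ?_) hstat
  rw [networkLogLikelihood, sum_update_eq_add_sum_sdiff _ (fun j _ _ => layerLogDensity_congr)
      (t := {k, k + 1}) (by intro j; simp; omega) (by intro j; simp; omega),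
    sum_pair (by omega), layerLogDensity_update_self hk, layerLogDensity_succ_update,
    update_of_ne (by omega)]
  ring

theorem layerResidual_eq_gradient_log_output {C : ℝ} (hL : 2 ≤ L)
    (hπ : DifferentiableAt ℝ (fun x => πL x a) (hhat (L - 1))) (hπpos : πL (hhat (L - 1)) a ≠ 0)
    (hstat : gradient (fun x => -networkLogLikelihood L g σ W πL a (update hhat (L - 1) x) + C)
      (hhat (L - 1)) = 0) :
    layerResidual g σ W hhat (L - 1) = gradient (fun x => Real.log (πL x a)) (hhat (L - 1)) := by
  refine layerResidual_eq_of_stationary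
    ((hπ.log hπpos).hasGradientAt.add_const
      (∑ j ∈ Icc 1 (L - 1) \ {L - 1}, layerLogDensity g σ W j hhat)) (fun x => ?_) hstat
  rw [networkLogLikelihood, sum_update_eq_add_sum_sdiff _ (fun j _ _ => layerLogDensity_congr)
      (t := {L - 1}) (by intro j; simp; omega) (by intro j; simp; omega),
    sum_singleton, layerLogDensity_update_self (by omega), update_self]
  ring

end Network

theorem stmt7_general (L : ℕ) (n dpar : ℕ → ℕ)
    (g : (l : ℕ) → EuclideanSpace ℝ (Fin (dpar l)) →
      EuclideanSpace ℝ (Fin (n (l - 1))) → EuclideanSpace ℝ (Fin (n l)))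
    (σ : ℕ → ℝ)
    (hgdiff₁ : ∀ l ∈ Finset.Icc 1 (L - 1), ∀ w, Differentiable ℝ (g l w))
    (hgdiff₂ : ∀ l ∈ Finset.Icc 1 (L - 1), ∀ x, Differentiable ℝ (fun w => g l w x))
    (α : Type*) (πL : EuclideanSpace ℝ (Fin (n (L - 1))) → α → ℝ)
    (hπLpos : ∀ x b, 0 < πL x b)
    (hπLdiff : ∀ b, Differentiable ℝ (fun x => πL x b))
    (W : (l : ℕ) → EuclideanSpace ℝ (Fin (dpar l)))
    (a : α) (C : ℝ)
    (hhat : (l : ℕ) → EuclideanSpace ℝ (Fin (n l)))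
    (hstat : ∀ k ∈ Finset.Icc 1 (L - 1),
      gradient (fun x : EuclideanSpace ℝ (Fin (n k)) =>
        -((∑ j ∈ Finset.Icc 1 (L - 1),
            Real.log (gaussDensity (σ j) (g j (W j) (Function.update hhat k x (j - 1)))
              (Function.update hhat k x j)))
          + Real.log (πL (Function.update hhat k x (L - 1)) a)) + C) (hhat k) = 0)
    (v : (k : ℕ) → EuclideanSpace ℝ (Fin (n k)))
    (hvtop : v (L - 1) = gradient (fun x => Real.log (πL x a)) (hhat (L - 1)))
    (hvrec : ∀ k, k + 1 ≤ L - 1 →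
      v k = (show EuclideanSpace ℝ (Fin (n k)) from
        (ContinuousLinearMap.adjoint (fderiv ℝ (g (k + 1) (W (k + 1))) (hhat k)))
          (v (k + 1))))
    (l : ℕ) (hl : l ∈ Finset.Icc 1 (L - 1)) :
    gradient (fun w => Real.log (gaussDensity (σ l) (g l w (hhat (l - 1))) (hhat l))) (W l)
      = (ContinuousLinearMap.adjoint (fderiv ℝ (fun w => g l w (hhat (l - 1))) (W l))) (v l) := by
  obtain ⟨hl1, hlL⟩ := Finset.mem_Icc.mp hl
  have hresidual : layerResidual g σ W hhat l = v l := by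
    refine Nat.eq_of_backward_recursion
      (fun k => ContinuousLinearMap.adjoint (fderiv ℝ (g (k + 1) (W (k + 1))) (hhat k)))
      ?_ (fun k hk hkL => ?_) (fun k _ hkL => hvrec k hkL) hl1 hlL
    · rw [hvtop]
      exact layerResidual_eq_gradient_log_output (by omega)
        (hπLdiff a).differentiableAt (hπLpos _ a).ne' (hstat _ (by simp; omega))
    · exact layerResidual_eq_adjoint_layerResidual_succ hk hkL
        (hgdiff₁ (k + 1) (by simp; omega) _ _) (hstat k (by simp; omega))
  rw [(hasGradientAt_log_gaussDensity_comp _ (hgdiff₂ l hl _ _) _).gradient]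
  exact congrArg _ hresidual

/-- In a multi-layer network of stochastic units whose hidden layers are
normally distributed, `π_l(h^{l-1}, h^l; W^l) = N(h^l; g^l(h^{l-1}; W^l), σ_l² I)`, with a
strictly positive output density `π_L(h^{L-1}, a; W^L)` differentiable in `h^{L-1}`, and energy
`E(h; s, a) = −∑_{l=1}^{L} log π_l(h^{l-1}, h^l; W^l) + C(s, a)`: if `∇_h E(ĥ; s, a) = 0`
(with `ĥ^0 = s`), then for every `l ∈ {1, …, L−1}` the REINFORCE parameter gradient factorizes
as `∇_{W^l} log π_l(ĥ^{l-1}, ĥ^l; W^l) = (D_{W^l} g^l)ᵀ (D_{h^l} g^{l+1})ᵀ ⋯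
(D_{h^{L-2}} g^{L-1})ᵀ ∇_{h^{L-1}} log π_L(ĥ^{L-1}, a; W^L)`.  The backward chain
`(D_{h^k} g^{k+1})ᵀ ⋯ ∇_{h^{L-1}} log π_L` is encoded as any family `v` with
`v^{L-1} = ∇_{h^{L-1}} log π_L(ĥ^{L-1}, a; W^L)` and
`v^k = (D_{h^k} g^{k+1}(ĥ^k; W^{k+1}))ᵀ v^{k+1}` for `k < L−1`. -/
theorem stmt7 (L : ℕ) (n dpar : ℕ → ℕ)
    (g : (l : ℕ) → EuclideanSpace ℝ (Fin (dpar l)) →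
      EuclideanSpace ℝ (Fin (n (l - 1))) → EuclideanSpace ℝ (Fin (n l)))
    (σ : ℕ → ℝ) (hσ : ∀ l ∈ Finset.Icc 1 (L - 1), 0 < σ l)
    (hgdiff₁ : ∀ l ∈ Finset.Icc 1 (L - 1), ∀ w, Differentiable ℝ (g l w))
    (hgdiff₂ : ∀ l ∈ Finset.Icc 1 (L - 1), ∀ x, Differentiable ℝ (fun w => g l w x))
    (α : Type*) (πL : EuclideanSpace ℝ (Fin (n (L - 1))) → α → ℝ)
    (hπLpos : ∀ x b, 0 < πL x b)
    (hπLdiff : ∀ b, Differentiable ℝ (fun x => πL x b))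
    (W : (l : ℕ) → EuclideanSpace ℝ (Fin (dpar l)))
    (s : EuclideanSpace ℝ (Fin (n 0))) (a : α) (C : ℝ)
    (hhat : (l : ℕ) → EuclideanSpace ℝ (Fin (n l))) (hs : hhat 0 = s)
    (hstat : ∀ k ∈ Finset.Icc 1 (L - 1),
      gradient (fun x : EuclideanSpace ℝ (Fin (n k)) =>
        -((∑ j ∈ Finset.Icc 1 (L - 1),
            Real.log (gaussDensity (σ j) (g j (W j) (Function.update hhat k x (j - 1)))
              (Function.update hhat k x j)))
          + Real.log (πL (Function.update hhat k x (L - 1)) a)) + C) (hhat k) = 0)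
    (v : (k : ℕ) → EuclideanSpace ℝ (Fin (n k)))
    (hvtop : v (L - 1) = gradient (fun x => Real.log (πL x a)) (hhat (L - 1)))
    (hvrec : ∀ k, k + 1 ≤ L - 1 →
      v k = (show EuclideanSpace ℝ (Fin (n k)) from
        (ContinuousLinearMap.adjoint (fderiv ℝ (g (k + 1) (W (k + 1))) (hhat k)))
          (v (k + 1))))
    (l : ℕ) (hl : l ∈ Finset.Icc 1 (L - 1)) :
    gradient (fun w => Real.log (gaussDensity (σ l) (g l w (hhat (l - 1))) (hhat l))) (W l)
      = (ContinuousLinearMap.adjoint (fderiv ℝ (fun w => g l w (hhat (l - 1))) (W l))) (v l) :=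
  stmt7_general L n dpar g σ hgdiff₁ hgdiff₂ α πL hπLpos hπLdiff W a C hhat hstat v hvtop hvrec l hl
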